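/- In the BCK-algebra X'_n (n ≥ 5), for all x, y ∈ X'_n, if x ≤ y in the BCK-order then n·y ≤ n·x. -/

import Mathlib

/-- The operation of the linearly ordered BCK-algebra `X_n` written on natural
numbers: `x*y = 0` if `x ≤ y`, `x*0 = x`, `x*y = 1` if `x = y+1`, and
`x*y = x−y−1` if `x > y+1` and `y ≥ 1`. -/
def natStar (x y : ℕ) : ℕ :=
  if x ≤ y then 0 else if y = 0 then x else if x = y + 1 then 1 else x - y - 1

/-- The operation of `X'_n = {0, 1, …, n}` written on natural numbers:
`x·y = x*y` for `x, y ≤ n−1`; `n·0 = n`; `n·y = n−y−1` for `1 ≤ y ≤ n−2`;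
`n·(n−1) = 1`; `x·n = 0` for every `x ≠ n−1` (in particular `n·n = 0`);
and `(n−1)·n = 1`. -/
def primeVal (n x y : ℕ) : ℕ :=
  if y = n then (if x = n - 1 then 1 else 0)
  else if x = n then (if y = 0 then n else if y = n - 1 then 1 else n - y - 1)
  else natStar x y

theorem natStar_le (x y : ℕ) : natStar x y ≤ x := by
  unfold natStar; split_ifs <;> omega

theorem primeVal_lt {n x y : ℕ} (hn : 1 ≤ n) (hx : x < n + 1) (hy : y < n + 1) :
    primeVal n x y < n + 1 := by
  have h := natStar_le x y
  unfold primeVal; split_ifs <;> omega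

/-- The BCK-algebra operation of `X'_n = {0, 1, …, n}` (for `n ≥ 5`),
as an operation on `Fin (n+1)`. -/
def primeOp {n : ℕ} (hn : 5 ≤ n) (x y : Fin (n + 1)) : Fin (n + 1) :=
  ⟨primeVal n x y, primeVal_lt (by omega) x.isLt y.isLt⟩

/-- The BCK-order `a·b = 0` of `X'_n`: the chain `0 < 1 < ⋯ < n-1`, with `n` placed above `n-2`
and incomparable to `n-1`. -/
def PrimeLE (n a b : ℕ) : Prop :=
  (b = n ∧ a ≠ n - 1) ∨ (a ≤ b ∧ b ≠ n)

theorem primeVal_eq_zero_iff {n a b : ℕ} (hn : 0 < n) (hb : b ≤ n) :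
    primeVal n a b = 0 ↔ PrimeLE n a b := by
  unfold primeVal natStar PrimeLE
  split_ifs <;> grind

/-- `n·_` swaps `0` and `n`, sends `n-1` to `1` and reverses `1, …, n-2`. -/
theorem primeLE_primeVal_top {n a b : ℕ} (hn : 3 ≤ n) (hab : PrimeLE n a b) :
    PrimeLE n (primeVal n n b) (primeVal n n a) := by
  unfold PrimeLE primeVal at *
  split_ifs <;> omega

theorem primeOp_top_antitone (n : ℕ) (hn : 5 ≤ n) (x y : Fin (n + 1))
    (h : primeOp hn x y = 0) :
    primeOp hn (primeOp hn ⟨n, by omega⟩ y) (primeOp hn ⟨n, by omega⟩ x) = 0 := by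
  have hxy : PrimeLE n x y := (primeVal_eq_zero_iff (by omega) y.is_le).mp (congrArg Fin.val h)
  have hbound : primeVal n n x ≤ n := Nat.lt_succ_iff.mp (primeVal_lt (by omega) (by omega) x.isLt)
  exact Fin.ext <|
    (primeVal_eq_zero_iff (by omega) hbound).mpr (primeLE_primeVal_top (by omega) hxy)
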